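/- Convolution estimate, maximum case (Lemma 2.3(2)). Let γ > 0, let f : ℝ → ℝ be twice continuously differentiable with f'' ≥ γ on ℝ, and let g : ℝ → ℝ be continuous, attaining its maximum M = max_ℝ g at some point c ∈ ℝ. Assume the map ψ = √((M − g)/γ) is K-Lipschitz with 0 < K ≤ 1/√8, and set α = (1 − √(1−8K²))/(4K²). Let u : ℝ → ℝ be a bounded continuously differentiable function with bounded derivative u'. Then for every x ∈ ℝ and for either choice of sign, ∫_ℝ p(x − y) 1_{ℝ^±}(x − y) [ g(u(y)) + (f''(u(y))/2) u'(y)² ] dy ≥ (α/2)( g(u(x)) − M ) + M/2, where 1_{ℝ^+} and 1_{ℝ^-} denote the indicator functions of the positive and negative half-lines. -/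

import Mathlib

/-!
On each half-line put `v(s) = u(x ∓ s)` and `φ = ψ ∘ v`, so that `g(v) = M - γ φ²`; since
`f'' ≥ γ`, the integral is at least `M/2 - (γ/2) ∫₀^∞ e^{-s} (φ² - v'²/2) ds`. The Lipschitz bound
gives `φ(s) ≤ W(s) := φ(0) + K ∫₀^s |v'|`, and because `α` is a root of `2K²X² - X + 1`,
completing the square yields `e^{-s} (φ² - v'²/2) ≤ -(α e^{-s} W²)'`. Integrating,
`∫₀^∞ e^{-s} (φ² - v'²/2) ≤ α φ(0)² = α (M - g(u x)) / γ`.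
-/

open MeasureTheory Set

noncomputable def pker (x : ℝ) : ℝ := (1 / 2) * Real.exp (-|x|)

/-- The smaller root of `2 K² X² - X + 1`. -/
noncomputable def lipschitzAlpha (K : ℝ) : ℝ := (1 - √(1 - 8 * K ^ 2)) / (4 * K ^ 2)

lemma lipschitzAlpha_nonneg (K : ℝ) : 0 ≤ lipschitzAlpha K :=
  div_nonneg (sub_nonneg.2 (Real.sqrt_le_one.2 (by nlinarith [sq_nonneg K]))) (by positivity)

lemma lipschitzAlpha_quadratic_eq {K : ℝ} (hK : K ≠ 0) (hK8 : 8 * K ^ 2 ≤ 1) :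
    2 * K ^ 2 * lipschitzAlpha K ^ 2 - lipschitzAlpha K + 1 = 0 := by
  have hs := Real.sq_sqrt (sub_nonneg.2 hK8)
  unfold lipschitzAlpha
  generalize √(1 - 8 * K ^ 2) = t at hs ⊢
  field_simp
  linear_combination 2 * hs

lemma integrableOn_exp_neg_mul_comp {X : Type*} [TopologicalSpace X] {H : X → ℝ} {c : ℝ → X}
    {S : Set X} (hH : Continuous H) (hc : Continuous c) (hS : IsCompact S) (hcS : ∀ s, c s ∈ S)
    (a : ℝ) : IntegrableOn (fun s => Real.exp (-s) * H (c s)) (Ioi a) := by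
  obtain ⟨B, hB⟩ := hS.exists_bound_of_continuousOn hH.continuousOn
  exact (integrableOn_exp_neg_Ioi a).mul_bdd (hH.comp hc).aestronglyMeasurable
    (ae_of_all _ fun s => hB _ (hcS s))

lemma integral_pker_mul_indicator_Ioi (F : ℝ → ℝ) (x : ℝ) :
    ∫ y, pker (x - y) * (Ioi (0 : ℝ)).indicator (fun _ => (1 : ℝ)) (x - y) * F y
      = (∫ s in Ioi 0, Real.exp (-s) * F (x - s)) / 2 := by
  rw [← integral_sub_left_eq_self _ volume x, ← integral_indicator measurableSet_Ioi,
    ← integral_div]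
  congr 1 with s
  by_cases hs : 0 < s
  · simp only [pker, sub_sub_cancel, abs_of_pos hs, mem_Ioi, hs, indicator_of_mem]
    ring
  · simp [hs]

lemma integral_pker_mul_indicator_Iio (F : ℝ → ℝ) (x : ℝ) :
    ∫ y, pker (x - y) * (Iio (0 : ℝ)).indicator (fun _ => (1 : ℝ)) (x - y) * F y
      = (∫ s in Ioi 0, Real.exp (-s) * F (x + s)) / 2 := by
  rw [← integral_add_left_eq_self _ x, ← integral_indicator measurableSet_Ioi,
    ← integral_div]
  congr 1 with s
  by_cases hs : 0 < s
  · simp only [pker, sub_add_cancel_left, abs_neg, abs_of_pos hs, mem_Iio, Left.neg_neg_iff, hs,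
      indicator_of_mem, mem_Ioi]
    ring
  · simp [hs]

lemma setIntegral_exp_neg_mul_sq_sub_half_sq_le {K α a : ℝ} {φ m : ℝ → ℝ} (hα : 0 ≤ α)
    (hroot : 2 * K ^ 2 * α ^ 2 - α + 1 = 0) (hm : Continuous m) (hφ : ∀ s, 0 ≤ φ s)
    (hgrow : ∀ s, 0 ≤ s → φ s ≤ a + K * ∫ t in (0 : ℝ)..s, m t) :
    ∫ s in Ioi 0, Real.exp (-s) * (φ s ^ 2 - m s ^ 2 / 2) ≤ α * a ^ 2 := by
  by_cases hint : IntegrableOn (fun s => Real.exp (-s) * (φ s ^ 2 - m s ^ 2 / 2)) (Ioi 0)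
  swap
  · rw [integral_undef hint]
    positivity
  set W : ℝ → ℝ := fun s => a + K * ∫ t in (0 : ℝ)..s, m t
  have hW s : HasDerivAt W (K * m s) s :=
    ((hm.integral_hasStrictDerivAt 0 s).hasDerivAt.const_mul K).const_add a
  have hG s : HasDerivAt (fun s => -(α * (Real.exp (-s) * W s ^ 2)))
      (α * Real.exp (-s) * (W s ^ 2 - 2 * K * m s * W s)) s := by
    refine (((hasDerivAt_neg s).exp.fun_mul ((hW s).fun_pow 2)).const_mul α).fun_neg
      |>.congr_deriv ?_
    norm_num
    ring
  have hpt s (hs : 0 ≤ s) : Real.exp (-s) * (φ s ^ 2 - m s ^ 2 / 2)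
      ≤ α * Real.exp (-s) * (W s ^ 2 - 2 * K * m s * W s) := by
    have hφW : φ s ^ 2 ≤ W s ^ 2 := pow_le_pow_left₀ (hφ s) (hgrow s hs) 2
    -- `α (W² - 2KmW) - (W² - m²/2) = (m - 2αKW)²/2 - (2K²α² - α + 1) W²`
    have : φ s ^ 2 - m s ^ 2 / 2 ≤ α * (W s ^ 2 - 2 * K * m s * W s) := by
      nlinarith [sq_nonneg (m s - 2 * α * K * W s), congrArg (· * W s ^ 2) hroot]
    nlinarith [Real.exp_pos (-s)]
  have hT : ∀ T, 0 ≤ T →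
      ∫ s in (0 : ℝ)..T, Real.exp (-s) * (φ s ^ 2 - m s ^ 2 / 2) ≤ α * a ^ 2 := by
    intro T hT
    have hftc := intervalIntegral.integral_le_sub_of_hasDeriv_right_of_le hT
      (fun s _ => (hG s).continuousAt.continuousWithinAt) (fun s _ => (hG s).hasDerivWithinAt)
      (by rw [integrableOn_Icc_iff_integrableOn_Ioc]; exact hint.mono_set Ioc_subset_Ioi_self)
      (fun s hs => hpt s hs.1.le)
    have hW0 : W 0 = a := by simp [W]
    have hWT : 0 ≤ α * (Real.exp (-T) * W T ^ 2) := by positivity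
    rw [hW0, neg_zero, Real.exp_zero] at hftc
    linarith
  exact le_of_tendsto (intervalIntegral_tendsto_integral_Ioi 0 hint Filter.tendsto_id)
    (Filter.eventually_atTop.2 ⟨0, hT⟩)

theorem convolution_estimate_max_halfLine {γ M K α : ℝ} {g q ψ v : ℝ → ℝ} (hγ : 0 < γ)
    (hg : Continuous g) (hmax : ∀ z, g z ≤ M) (hψ : ∀ z, ψ z = √((M - g z) / γ)) (hK : 0 ≤ K)
    (hLip : ∀ a b, |ψ a - ψ b| ≤ K * |a - b|) (hα : 0 ≤ α)
    (hroot : 2 * K ^ 2 * α ^ 2 - α + 1 = 0) (hq : Continuous q) (hqγ : ∀ z, γ ≤ q z)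
    (hv : ContDiff ℝ 1 v) (hbd : ∃ C, ∀ s, |v s| ≤ C ∧ |deriv v s| ≤ C) :
    α * (g (v 0) - M) + M
      ≤ ∫ s in Ioi 0, Real.exp (-s) * (g (v s) + q (v s) / 2 * deriv v s ^ 2) := by
  obtain ⟨C, hC⟩ := hbd
  have hv' : Continuous (deriv v) := hv.continuous_deriv le_rfl
  have hψc : Continuous ψ := by
    rw [funext hψ]
    fun_prop
  have hgψ z : g z = M - γ * ψ z ^ 2 := by
    rw [hψ, Real.sq_sqrt (div_nonneg (sub_nonneg.2 (hmax z)) hγ.le)]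
    field_simp
    ring
  have hcurve : Continuous fun s => (v s, deriv v s) := hv.continuous.prodMk hv'
  have hball s : (v s, deriv v s) ∈ Metric.closedBall (0 : ℝ × ℝ) C := by
    simpa [Prod.norm_def] using hC s
  have hE := integrableOn_exp_neg_mul_comp (H := fun p : ℝ × ℝ => ψ p.1 ^ 2 - p.2 ^ 2 / 2)
    (by fun_prop) hcurve (isCompact_closedBall _ _) hball 0
  have hF := integrableOn_exp_neg_mul_comp (H := fun p : ℝ × ℝ => g p.1 + q p.1 / 2 * p.2 ^ 2)
    (by fun_prop) hcurve (isCompact_closedBall _ _) hball 0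
  have hgrow s (hs : 0 ≤ s) : ψ (v s) ≤ ψ (v 0) + K * ∫ t in (0 : ℝ)..s, |deriv v t| := by
    have hdisp : ‖v s - v 0‖ ≤ ∫ t in (0 : ℝ)..s, |deriv v t| :=
      norm_sub_le_integral_of_norm_deriv_le_of_le hs hv.continuous.continuousOn
        (hv.differentiable one_ne_zero).differentiableOn (ae_of_all _ fun t _ => le_rfl)
        (hv'.abs.intervalIntegrable _ _)
    rw [Real.norm_eq_abs] at hdisp
    linarith [le_abs_self (ψ (v s) - ψ (v 0)), hLip (v s) (v 0),
      mul_le_mul_of_nonneg_left hdisp hK]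
  have henergy := setIntegral_exp_neg_mul_sq_sub_half_sq_le hα hroot hv'.abs
    (fun s => by rw [hψ]; positivity) hgrow
  simp only [sq_abs] at henergy
  have hpt s : M * Real.exp (-s) - γ * (Real.exp (-s) * (ψ (v s) ^ 2 - deriv v s ^ 2 / 2))
      ≤ Real.exp (-s) * (g (v s) + q (v s) / 2 * deriv v s ^ 2) := by
    rw [hgψ (v s)]
    nlinarith [mul_nonneg (Real.exp_pos (-s)).le
      (mul_nonneg (sq_nonneg (deriv v s)) (sub_nonneg.2 (hqγ (v s))))]
  calc α * (g (v 0) - M) + M = M - γ * (α * ψ (v 0) ^ 2) := by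
        rw [hgψ]
        ring
    _ ≤ M - γ * ∫ s in Ioi 0, Real.exp (-s) * (ψ (v s) ^ 2 - deriv v s ^ 2 / 2) := by
        gcongr
    _ = ∫ s in Ioi 0, (M * Real.exp (-s)
          - γ * (Real.exp (-s) * (ψ (v s) ^ 2 - deriv v s ^ 2 / 2))) := by
        rw [integral_sub ((integrableOn_exp_neg_Ioi 0).const_mul M) (hE.const_mul γ),
          integral_const_mul, integral_const_mul, integral_exp_neg_Ioi_zero, mul_one]
    _ ≤ _ := setIntegral_mono_on (((integrableOn_exp_neg_Ioi 0).const_mul M).sub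
          (hE.const_mul γ)) hF measurableSet_Ioi fun s _ => hpt s

theorem convolution_estimate_max_general
    (γ : ℝ) (hγ : 0 < γ)
    (f : ℝ → ℝ) (hf : ContDiff ℝ 2 f) (hconv : ∀ x : ℝ, γ ≤ deriv (deriv f) x)
    (g : ℝ → ℝ) (hg : Continuous g)
    (M : ℝ) (hmax : ∀ x : ℝ, g x ≤ M)
    (K : ℝ) (hK0 : 0 < K) (hK1 : K ≤ 1 / Real.sqrt 8)
    (ψ : ℝ → ℝ) (hψ : ∀ x : ℝ, ψ x = Real.sqrt ((M - g x) / γ))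
    (hLip : ∀ a b : ℝ, |ψ a - ψ b| ≤ K * |a - b|)
    (α : ℝ) (hα : α = (1 - Real.sqrt (1 - 8 * K ^ 2)) / (4 * K ^ 2))
    (u : ℝ → ℝ) (hu : ContDiff ℝ 1 u)
    (hbd : ∃ C : ℝ, ∀ x : ℝ, |u x| ≤ C ∧ |deriv u x| ≤ C) :
    ∀ x : ℝ,
      (α / 2) * (g (u x) - M) + M / 2 ≤
        ∫ y : ℝ, pker (x - y) * Set.indicator (Set.Ioi (0 : ℝ)) (fun _ => (1 : ℝ)) (x - y) *
          (g (u y) + deriv (deriv f) (u y) / 2 * (deriv u y) ^ 2) ∧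
      (α / 2) * (g (u x) - M) + M / 2 ≤
        ∫ y : ℝ, pker (x - y) * Set.indicator (Set.Iio (0 : ℝ)) (fun _ => (1 : ℝ)) (x - y) *
          (g (u y) + deriv (deriv f) (u y) / 2 * (deriv u y) ^ 2) := by
  intro x
  have hK8 : 8 * K ^ 2 ≤ 1 := by
    have := pow_le_pow_left₀ hK0.le hK1 2
    rw [div_pow, one_pow, Real.sq_sqrt (by norm_num)] at this
    linarith
  obtain rfl : α = lipschitzAlpha K := hα
  obtain ⟨C, hC⟩ := hbd
  have halfLine (v : ℝ → ℝ) := convolution_estimate_max_halfLine (v := v) hγ hg hmax hψ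
    hK0.le hLip (lipschitzAlpha_nonneg K) (lipschitzAlpha_quadratic_eq hK0.ne' hK8)
    ((contDiff_succ_iff_deriv.1 hf).2.2.continuous_deriv le_rfl) hconv
  have hleft := halfLine (fun s => u (x - s)) (hu.comp (contDiff_const.sub contDiff_id))
    ⟨C, fun s => by simpa [deriv_comp_const_sub] using hC (x - s)⟩
  have hright := halfLine (fun s => u (x + s)) (hu.comp (contDiff_const.add contDiff_id))
    ⟨C, fun s => by simpa [deriv_comp_const_add] using hC (x + s)⟩
  simp only [deriv_comp_const_sub, deriv_comp_const_add, neg_sq,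
    sub_zero, add_zero] at hleft hright
  rw [integral_pker_mul_indicator_Ioi, integral_pker_mul_indicator_Iio]
  constructor <;> linarith

/-- Convolution estimate, maximum case (Lemma 2.3(2)): for either choice of the
half-line indicator, `(p 1_{ℝ^±}) * (g(u) + f''(u)/2 u'²) ≥ (α/2)(g(u) - M) + M/2`. -/
theorem convolution_estimate_max
    (γ : ℝ) (hγ : 0 < γ)
    (f : ℝ → ℝ) (hf : ContDiff ℝ 2 f) (hconv : ∀ x : ℝ, γ ≤ deriv (deriv f) x)
    (g : ℝ → ℝ) (hg : Continuous g)
    (c M : ℝ) (hgc : g c = M) (hmax : ∀ x : ℝ, g x ≤ M)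
    (K : ℝ) (hK0 : 0 < K) (hK1 : K ≤ 1 / Real.sqrt 8)
    (ψ : ℝ → ℝ) (hψ : ∀ x : ℝ, ψ x = Real.sqrt ((M - g x) / γ))
    (hLip : ∀ a b : ℝ, |ψ a - ψ b| ≤ K * |a - b|)
    (α : ℝ) (hα : α = (1 - Real.sqrt (1 - 8 * K ^ 2)) / (4 * K ^ 2))
    (u : ℝ → ℝ) (hu : ContDiff ℝ 1 u)
    (hbd : ∃ C : ℝ, ∀ x : ℝ, |u x| ≤ C ∧ |deriv u x| ≤ C) :
    ∀ x : ℝ,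
      (α / 2) * (g (u x) - M) + M / 2 ≤
        ∫ y : ℝ, pker (x - y) * Set.indicator (Set.Ioi (0 : ℝ)) (fun _ => (1 : ℝ)) (x - y) *
          (g (u y) + deriv (deriv f) (u y) / 2 * (deriv u y) ^ 2) ∧
      (α / 2) * (g (u x) - M) + M / 2 ≤
        ∫ y : ℝ, pker (x - y) * Set.indicator (Set.Iio (0 : ℝ)) (fun _ => (1 : ℝ)) (x - y) *
          (g (u y) + deriv (deriv f) (u y) / 2 * (deriv u y) ^ 2) :=
  convolution_estimate_max_general γ hγ f hf hconv g hg M hmax K hK0 hK1 ψ hψ hLip α hα u hu hbd
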